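/- With the layers L_i defined from the chain of τ-narrow cuts (τ ≤ 1/4), for any 1 ≤ i ≤ k+1 and any partition π = {W₁, …, W_ℓ} of L_i into ℓ nonempty parts, the total undirected x-weight of arcs crossing between distinct parts of π is at least ℓ − 1 − 2τ. -/
import Mathlib


open Finset

variable {V : Type*} [Fintype V] [DecidableEq V]

/-- Total `x`-weight of arcs from `A` to `B`. -/
def flowBtw (x : V → V → ℝ) (A B : Finset V) : ℝ := ∑ u ∈ A, ∑ v ∈ B, x u v

/-- `x(∂⁺(U))`: weight of arcs leaving `U`. -/
def cutOut (x : V → V → ℝ) (U : Finset V) : ℝ := flowBtw x U Uᶜ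

/-- `x(∂⁻(U))`: weight of arcs entering `U`. -/
def cutIn (x : V → V → ℝ) (U : Finset V) : ℝ := flowBtw x Uᶜ U

/-- Feasibility for the ATSPP subtour elimination LP on the complete digraph on `V`. -/
structure FeasLP (s t : V) (x : V → V → ℝ) : Prop where
  nonneg : ∀ u v, 0 ≤ x u v
  diag : ∀ v, x v v = 0
  outS : ∑ v, x s v = 1
  inS : ∑ v, x v s = 0
  inT : ∑ v, x v t = 1
  outT : ∑ v, x t v = 0
  outDeg : ∀ v, v ≠ s → v ≠ t → ∑ w, x v w = 1
  inDeg : ∀ v, v ≠ s → v ≠ t → ∑ w, x w v = 1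
  cut : ∀ U : Finset V, s ∈ U → U ≠ Finset.univ → 1 ≤ cutOut x U

/-- A `τ`-narrow `s`-`t` cut: `s ∈ U`, `t ∉ U`, and `x(∂⁺(U)) < 1 + τ`. -/
def NarrowCut (s t : V) (x : V → V → ℝ) (τ : ℝ) (U : Finset V) : Prop :=
  s ∈ U ∧ t ∉ U ∧ cutOut x U < 1 + τ

section Aux

set_option linter.unusedSectionVars false

lemma flowBtw_nonneg (x : V → V → ℝ) (hx : ∀ u v, 0 ≤ x u v) (A B : Finset V) :
    0 ≤ flowBtw x A B :=
  Finset.sum_nonneg fun u _ => Finset.sum_nonneg fun v _ => hx u v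

lemma flowBtw_mono (x : V → V → ℝ) (hx : ∀ u v, 0 ≤ x u v) {A A' : Finset V} (B : Finset V)
    (hA : A ⊆ A') : flowBtw x A B ≤ flowBtw x A' B :=
  Finset.sum_le_sum_of_subset_of_nonneg hA
    (fun u _ _ => Finset.sum_nonneg fun v _ => hx u v)

lemma flowBtw_union_right (x : V → V → ℝ) {B C : Finset V} (A : Finset V)
    (h : Disjoint B C) :
    flowBtw x A (B ∪ C) = flowBtw x A B + flowBtw x A C := by
  unfold flowBtw
  rw [← Finset.sum_add_distrib]
  exact Finset.sum_congr rfl fun u _ => Finset.sum_union h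

lemma rowcol (x : V → V → ℝ) (Z : Finset V) :
    (∑ v ∈ Z, (∑ w, x v w) = (∑ v ∈ Z, ∑ w ∈ Z, x v w) + cutOut x Z)
    ∧ (∑ v ∈ Z, (∑ w, x w v) = (∑ v ∈ Z, ∑ w ∈ Z, x v w) + cutIn x Z) := by
  constructor
  · unfold cutOut flowBtw
    rw [← Finset.sum_add_distrib]
    exact Finset.sum_congr rfl fun v _ => (Finset.sum_add_sum_compl Z _).symm
  · unfold cutIn flowBtw
    have h1 : ∑ v ∈ Z, (∑ w, x w v)
        = (∑ v ∈ Z, ∑ w ∈ Z, x w v) + ∑ v ∈ Z, ∑ w ∈ Zᶜ, x w v := by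
      rw [← Finset.sum_add_distrib]
      exact Finset.sum_congr rfl fun v _ => (Finset.sum_add_sum_compl Z _).symm
    rw [h1, Finset.sum_comm (s := Z) (t := Z) (f := fun v w => x w v),
        Finset.sum_comm (s := Z) (t := Zᶜ) (f := fun v w => x w v)]

lemma conserve_zero {s t : V} {x : V → V → ℝ} (hx : FeasLP s t x) {Z : Finset V}
    (hs : s ∉ Z) (ht : t ∉ Z) : cutOut x Z = cutIn x Z := by
  have key : ∑ v ∈ Z, (∑ w, x v w) = ∑ v ∈ Z, (∑ w, x w v) := by
    refine Finset.sum_congr rfl fun v hv => ?_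
    have hvs : v ≠ s := fun h => hs (h ▸ hv)
    have hvt : v ≠ t := fun h => ht (h ▸ hv)
    rw [hx.outDeg v hvs hvt, hx.inDeg v hvs hvt]
  have e1 := (rowcol x Z).1
  have e2 := (rowcol x Z).2
  linarith

lemma conserve_one {s t : V} {x : V → V → ℝ} (hx : FeasLP s t x) {U : Finset V}
    (hs : s ∈ U) (ht : t ∉ U) : cutOut x U = cutIn x U + 1 := by
  have key : ∑ v ∈ U, (∑ w, x v w) = (∑ v ∈ U, (∑ w, x w v)) + 1 := by
    rw [← Finset.sum_erase_add _ _ hs, ← Finset.sum_erase_add _ _ hs, hx.outS, hx.inS]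
    have h : ∀ v ∈ U.erase s, (∑ w, x v w) = ∑ w, x w v := by
      intro v hv
      have hvs : v ≠ s := Finset.ne_of_mem_erase hv
      have hvU : v ∈ U := Finset.mem_of_mem_erase hv
      have hvt : v ≠ t := fun h => ht (h ▸ hvU)
      rw [hx.outDeg v hvs hvt, hx.inDeg v hvs hvt]
    rw [Finset.sum_congr rfl h]; ring
  have e1 := (rowcol x U).1
  have e2 := (rowcol x U).2
  linarith

lemma pair_sum {n : ℕ} (f : Fin n → Fin n → ℝ) :
    ∑ p ∈ Finset.univ.filter (fun p : Fin n × Fin n => p.1 < p.2), (f p.1 p.2 + f p.2 p.1)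
      = ∑ j, ∑ j' ∈ Finset.univ.erase j, f j j' := by
  have h1 : ∑ j, ∑ j' ∈ Finset.univ.erase j, f j j'
      = ∑ p ∈ Finset.univ.filter (fun p : Fin n × Fin n => p.1 ≠ p.2), f p.1 p.2 := by
    rw [Finset.sum_filter, Fintype.sum_prod_type]
    refine Finset.sum_congr rfl fun j _ => ?_
    rw [← Finset.sum_filter, Finset.filter_ne Finset.univ j]
  have h2 : Finset.univ.filter (fun p : Fin n × Fin n => p.1 ≠ p.2)
      = Finset.univ.filter (fun p : Fin n × Fin n => p.1 < p.2)
        ∪ Finset.univ.filter (fun p : Fin n × Fin n => p.2 < p.1) := by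
    ext p
    simp only [Finset.mem_filter, Finset.mem_union, Finset.mem_univ, true_and]
    constructor
    · exact fun h => h.lt_or_gt
    · rintro (h | h)
      · exact h.ne
      · exact h.ne'
  have hdisj : Disjoint
      (Finset.univ.filter (fun p : Fin n × Fin n => p.1 < p.2))
      (Finset.univ.filter (fun p : Fin n × Fin n => p.2 < p.1)) := by
    rw [Finset.disjoint_left]
    intro p hp hp'
    simp only [Finset.mem_filter] at hp hp'
    exact absurd hp'.2 (lt_asymm hp.2)
  have h3 : ∑ p ∈ Finset.univ.filter (fun p : Fin n × Fin n => p.1 < p.2), f p.2 p.1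
      = ∑ p ∈ Finset.univ.filter (fun p : Fin n × Fin n => p.2 < p.1), f p.1 p.2 := by
    refine Finset.sum_nbij' (i := Prod.swap) (j := Prod.swap) ?_ ?_ ?_ ?_ ?_
    · intro p hp; simp only [Finset.mem_filter, Finset.mem_univ, true_and] at hp ⊢; exact hp
    · intro p hp; simp only [Finset.mem_filter, Finset.mem_univ, true_and] at hp ⊢; exact hp
    · intro p _; rfl
    · intro p _; rfl
    · intro p _; rfl
  rw [Finset.sum_add_distrib, h3, h1, h2, Finset.sum_union hdisj]

end Aux

theorem stmt4 (s t : V) (hst : s ≠ t) (x : V → V → ℝ) (hx : FeasLP s t x)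
    (τ : ℝ) (hτ0 : 0 ≤ τ) (hτ : τ ≤ 1/4)
    (k : ℕ) (hk : 2 ≤ k) (Uc L : ℕ → Finset V)
    (hU1 : Uc 1 = {s}) (hUk : Uc k = Finset.univ \ {t})
    (hmono : ∀ i j, 1 ≤ i → i < j → j ≤ k → Uc i ⊂ Uc j)
    (hnarrow : ∀ i, 1 ≤ i → i ≤ k → NarrowCut s t x τ (Uc i))
    (hall : ∀ W : Finset V, NarrowCut s t x τ W → ∃ i, 1 ≤ i ∧ i ≤ k ∧ W = Uc i)
    (hL1 : L 1 = {s}) (hLtop : L (k+1) = {t})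
    (hL : ∀ i, 1 < i → i ≤ k → L i = Uc i \ Uc (i-1)) :
    ∀ i, 1 ≤ i → i ≤ k + 1 →
      ∀ (ℓ : ℕ) (W : Fin ℓ → Finset V),
        (∀ j, (W j).Nonempty) →
        (∀ j j', j ≠ j' → Disjoint (W j) (W j')) →
        (Finset.univ.biUnion W = L i) →
        (ℓ : ℝ) - 1 - 2*τ ≤
          ∑ p ∈ Finset.univ.filter (fun p : Fin ℓ × Fin ℓ => p.1 < p.2),
            (flowBtw x (W p.1) (W p.2) + flowBtw x (W p.2) (W p.1)) := by
  intro i hi1 hi2 ℓ W hne hdis hcover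
  rcases Nat.lt_or_ge ℓ 2 with hl | hl
  · -- trivial case ℓ ≤ 1
    have hR : 0 ≤ ∑ p ∈ Finset.univ.filter (fun p : Fin ℓ × Fin ℓ => p.1 < p.2),
        (flowBtw x (W p.1) (W p.2) + flowBtw x (W p.2) (W p.1)) :=
      Finset.sum_nonneg fun p _ =>
        add_nonneg (flowBtw_nonneg x hx.nonneg _ _) (flowBtw_nonneg x hx.nonneg _ _)
    have hl' : (ℓ : ℝ) ≤ 1 := by exact_mod_cast Nat.lt_succ_iff.mp hl
    linarith
  · -- main case : ℓ ≥ 2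
    -- two distinct elements of L i
    have h2i : 2 ≤ i ∧ i ≤ k := by
      obtain ⟨a, ha⟩ := hne ⟨0, by omega⟩
      obtain ⟨b, hb⟩ := hne ⟨1, by omega⟩
      have hab : a ≠ b := by
        intro h
        exact Finset.disjoint_left.mp (hdis _ _ (Fin.ne_of_val_ne (by norm_num))) ha (h ▸ hb)
      have haL : a ∈ L i := by
        rw [← hcover]; exact Finset.mem_biUnion.mpr ⟨_, Finset.mem_univ _, ha⟩
      have hbL : b ∈ L i := by
        rw [← hcover]; exact Finset.mem_biUnion.mpr ⟨_, Finset.mem_univ _, hb⟩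
      have hi1' : i ≠ 1 := by
        intro h
        rw [h, hL1, Finset.mem_singleton] at haL hbL
        exact hab (haL.trans hbL.symm)
      have hik : i ≠ k + 1 := by
        intro h
        rw [h, hLtop, Finset.mem_singleton] at haL hbL
        exact hab (haL.trans hbL.symm)
      omega
    obtain ⟨hi2', hik⟩ := h2i
    obtain ⟨hsU, htU, hcU⟩ := hnarrow (i-1) (by omega) (by omega)
    obtain ⟨hsU', htU', hcU'⟩ := hnarrow i (by omega) (by omega)
    have hUU' : Uc (i-1) ⊆ Uc i := (hmono (i-1) i (by omega) (by omega) (by omega)).subset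
    have hLi : L i = Uc i \ Uc (i-1) := hL i (by omega) (by omega)
    set U := Uc (i-1) with hU
    set U' := Uc i with hU'
    have hWL : ∀ j, W j ⊆ L i := by
      intro j
      rw [← hcover]
      exact Finset.subset_biUnion_of_mem W (Finset.mem_univ j)
    have hsL : s ∉ L i := by rw [hLi]; simp [hsU]
    have htL : t ∉ L i := by rw [hLi]; simp [htU']
    -- each part has out-flow at least 1
    have hpart : ∀ j, 1 ≤ cutOut x (W j) := by
      intro j
      have hsW : s ∉ W j := fun h => hsL (hWL j h)
      have htW : t ∉ W j := fun h => htL (hWL j h)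
      have hcompl : 1 ≤ cutOut x (W j)ᶜ := by
        refine hx.cut _ (Finset.mem_compl.mpr hsW) ?_
        intro h
        have : W j = ∅ := by
          simpa using congrArg compl h
        exact (hne j).ne_empty this
      have heq : cutOut x (W j)ᶜ = cutIn x (W j) := by
        unfold cutOut cutIn; rw [compl_compl]
      rw [conserve_zero hx hsW htW]
      rw [heq] at hcompl
      exact hcompl
    -- decomposition of each part's out-cut
    have hdecomp : ∀ j, cutOut x (W j)
        = (∑ j' ∈ Finset.univ.erase j, flowBtw x (W j) (W j')) + flowBtw x (W j) (L i)ᶜ := by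
      intro j
      have hsplit : (W j)ᶜ = (L i \ W j) ∪ (L i)ᶜ := by
        ext v
        simp only [Finset.mem_compl, Finset.mem_union, Finset.mem_sdiff]
        constructor
        · intro h
          by_cases hv : v ∈ L i
          · exact Or.inl ⟨hv, h⟩
          · exact Or.inr hv
        · rintro (⟨_, h⟩ | h) hmem
          · exact h hmem
          · exact h (hWL j hmem)
      have hdisj : Disjoint (L i \ W j) (L i)ᶜ :=
        disjoint_compl_right.mono_left Finset.sdiff_subset
      rw [show cutOut x (W j) = flowBtw x (W j) (W j)ᶜ from rfl, hsplit,
        flowBtw_union_right x _ hdisj]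
      congr 1
      have hLdiff : L i \ W j = (Finset.univ.erase j).biUnion W := by
        ext v
        constructor
        · intro hv
          obtain ⟨hvL, hvW⟩ := Finset.mem_sdiff.mp hv
          rw [← hcover] at hvL
          obtain ⟨j', _, hj'⟩ := Finset.mem_biUnion.mp hvL
          have hne' : j' ≠ j := fun h => hvW (h ▸ hj')
          exact Finset.mem_biUnion.mpr
            ⟨j', Finset.mem_erase.mpr ⟨hne', Finset.mem_univ _⟩, hj'⟩
        · intro hv
          obtain ⟨j', hj'm, hj'⟩ := Finset.mem_biUnion.mp hv
          obtain ⟨hj'ne, -⟩ := Finset.mem_erase.mp hj'm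
          exact Finset.mem_sdiff.mpr ⟨hWL j' hj', fun hvW =>
            Finset.disjoint_left.mp (hdis j' j hj'ne) hj' hvW⟩
      rw [hLdiff]
      unfold flowBtw
      have hpd : Set.PairwiseDisjoint ↑(Finset.univ.erase j) W :=
        fun a _ b _ hab => hdis a b hab
      have hinner : ∀ u, ∑ v ∈ (Finset.univ.erase j).biUnion W, x u v
          = ∑ j' ∈ Finset.univ.erase j, ∑ v ∈ W j', x u v :=
        fun u => Finset.sum_biUnion hpd
      rw [Finset.sum_congr rfl fun u _ => hinner u]
      exact Finset.sum_comm
    -- total flow out of the layer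
    have hpdU : Set.PairwiseDisjoint ↑(Finset.univ : Finset (Fin ℓ)) W :=
      fun a _ b _ hab => hdis a b hab
    have hLsum : ∑ j, flowBtw x (W j) (L i)ᶜ = flowBtw x (L i) (L i)ᶜ := by
      rw [← hcover]
      unfold flowBtw
      exact (Finset.sum_biUnion hpdU).symm
    have hsum : ∑ j, cutOut x (W j)
        = (∑ j, ∑ j' ∈ Finset.univ.erase j, flowBtw x (W j) (W j'))
          + flowBtw x (L i) (L i)ᶜ := by
      rw [Finset.sum_congr rfl fun j _ => hdecomp j, Finset.sum_add_distrib, hLsum]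
    have hcard : (ℓ : ℝ) ≤ ∑ j, cutOut x (W j) := by
      have := Finset.sum_le_sum (s := (Finset.univ : Finset (Fin ℓ)))
        (f := fun _ => (1 : ℝ)) (g := fun j => cutOut x (W j)) (fun j _ => hpart j)
      simpa using this
    -- bound the flow leaving the layer
    have hLc : (L i)ᶜ = U ∪ U'ᶜ := by
      ext v
      simp only [hLi, Finset.mem_compl, Finset.mem_union, Finset.mem_sdiff]
      constructor
      · intro h
        by_cases hv : v ∈ U
        · exact Or.inl hv
        · by_cases hv' : v ∈ U'
          · exact absurd ⟨hv', hv⟩ h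
          · exact Or.inr hv'
      · rintro (h | h) ⟨hmem, hnmem⟩
        · exact hnmem h
        · exact h hmem
    have hdisjU : Disjoint U U'ᶜ := disjoint_compl_right.mono_left hUU'
    have hLU : L i ⊆ Uᶜ := by
      intro v hv
      rw [hLi] at hv
      exact Finset.mem_compl.mpr (Finset.mem_sdiff.mp hv).2
    have hLU' : L i ⊆ U' := by
      rw [hLi]; exact Finset.sdiff_subset
    have hb1 : flowBtw x (L i) U ≤ cutIn x U := by
      have := flowBtw_mono x hx.nonneg U hLU
      -- flowBtw x (L i) U ≤ flowBtw x Uᶜ U = cutIn x U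
      exact this
    have hb2 : flowBtw x (L i) U'ᶜ ≤ cutOut x U' :=
      flowBtw_mono x hx.nonneg U'ᶜ hLU'
    have hsplitL : flowBtw x (L i) (L i)ᶜ = flowBtw x (L i) U + flowBtw x (L i) U'ᶜ := by
      rw [hLc, flowBtw_union_right x _ hdisjU]
    have hcons : cutOut x U = cutIn x U + 1 := conserve_one hx hsU htU
    have hbound : flowBtw x (L i) (L i)ᶜ ≤ 1 + 2 * τ := by
      have h1 : cutIn x U ≤ τ := by linarith
      have h2 : cutOut x U' ≤ 1 + τ := le_of_lt hcU'
      rw [hsplitL]; linarith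
    rw [pair_sum (fun j j' => flowBtw x (W j) (W j'))]
    have : (ℓ : ℝ) ≤ (∑ j, ∑ j' ∈ Finset.univ.erase j, flowBtw x (W j) (W j'))
        + flowBtw x (L i) (L i)ᶜ := by
      rw [← hsum]; exact hcard
    linarith
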